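/- (Convergence of the Haar wavelet method for the IVP.) Let y, z : [0,1] → ℝ be three times differentiable with |y'''(t)| ≤ ξ₁ and |z'''(t)| ≤ ξ₂ for all t ∈ [0,1], where ξ₂ ≤ ξ₁ and ξ₁ > 0. Define the Haar coefficients a_{2^j+k+1} = 2^j ∫₀¹ y''(t) h_{2^j+k+1}(t) dt and b_{2^j+k+1} = 2^j ∫₀¹ z''(t) h_{2^j+k+1}(t) dt, and for an integer J ≥ 0 define E_{M1}(t) = Σ_{j=J+1}^∞ Σ_{k=0}^{2^j−1} a_{2^j+k+1} p_{2,2^j+k+1}(t), E_{M2}(t) = Σ_{j=J+1}^∞ Σ_{k=0}^{2^j−1} b_{2^j+k+1} p_{2,2^j+k+1}(t), and ‖E_M‖₂ = ‖E_{M1}‖₂ + ‖E_{M2}‖₂. Then for every ε > 0, if J > log₂(√(ξ₁/(3ε))) − 1, then ‖E_M‖₂ < ε. -/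

import Mathlib

/-!
Writing `h_i = 𝟙[η₁,∞) - 2·𝟙[η₂,∞) + 𝟙[η₃,∞)` turns both `p_{2,i}` and the Haar
coefficients of `f'` into second differences with step `w = 2^{-(j+1)}`: `p_{2,i}(t)` is half
the second difference of `s ↦ max(s, 0)²` at `t - η₁`, so `|p_{2,i}| ≤ w²`, and
`2^j ∫ f' h_i = -2^j (f(η₁) - 2f(η₂) + f(η₃))`, which the mean value theorem applied twice
bounds by `2^j ξ w²`. Level `j` of the expansion therefore contributes at most `ξ / 4^{j+2}`
uniformly in `t`, the tail beyond level `J` at most `ξ / (12·4^{J+1})`, and this sup bound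
dominates the `L²(0,1)` norm. The hypothesis on `J` says `ξ₁ < 3ε·4^{J+1}`.
-/

open MeasureTheory Real

/-- Left endpoint of the support of the Haar wavelet indexed by `(j, k)`. -/
noncomputable def eta1 (j k : ℕ) : ℝ := (k : ℝ) / 2 ^ j

/-- Midpoint of the support of the Haar wavelet indexed by `(j, k)`. -/
noncomputable def eta2 (j k : ℕ) : ℝ := (2 * (k : ℝ) + 1) / 2 ^ (j + 1)

/-- Right endpoint of the support of the Haar wavelet indexed by `(j, k)`. -/
noncomputable def eta3 (j k : ℕ) : ℝ := ((k : ℝ) + 1) / 2 ^ j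

/-- The Haar wavelet `h_i` with `i = 2^j + k + 1`: equals `1` on `[η₁, η₂)`,
`-1` on `[η₂, η₃)` and `0` elsewhere. -/
noncomputable def haarJK (j k : ℕ) (t : ℝ) : ℝ :=
  if eta1 j k ≤ t ∧ t < eta2 j k then 1
  else if eta2 j k ≤ t ∧ t < eta3 j k then -1
  else 0

/-- `p_{2,i}(t) = ∫₀ᵗ (t - s) h_i(s) ds` where `i = 2^j + k + 1`. -/
noncomputable def p2JK (j k : ℕ) (t : ℝ) : ℝ := ∫ s in (0:ℝ)..t, (t - s) * haarJK j k s

/-- The Haar coefficient `2^j ∫₀¹ f(t) h_{2^j+k+1}(t) dt` of a function `f`. -/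
noncomputable def haarCoeff (f : ℝ → ℝ) (j k : ℕ) : ℝ :=
  2 ^ j * ∫ t in (0:ℝ)..1, f t * haarJK j k t

/-- Truncation error of the Haar expansion at resolution `J`:
`Σ_{j=J+1}^∞ Σ_{k=0}^{2^j-1} c_{j,k} p_{2,2^j+k+1}(t)` (here the outer sum is
reindexed by `j = J + 1 + m`). -/
noncomputable def truncErr (c : ℕ → ℕ → ℝ) (J : ℕ) (t : ℝ) : ℝ :=
  ∑' m : ℕ, ∑ k ∈ Finset.range (2 ^ (J + 1 + m)), c (J + 1 + m) k * p2JK (J + 1 + m) k t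

/-- The `L²([0,1])` norm of a function. -/
noncomputable def L2norm (f : ℝ → ℝ) : ℝ := Real.sqrt (∫ t in (0:ℝ)..1, f t ^ 2)

open Set

lemma integral_indicator_Ioi_of_nonneg {E : Type*} [NormedAddCommGroup E] [NormedSpace ℝ E]
    {a : ℝ} (ha : 0 ≤ a) (b : ℝ) (g : ℝ → E) :
    ∫ s in (0:ℝ)..b, (Ioi a).indicator g s = ∫ s in a..max a b, g s := by
  rcases le_total a b with hab | hba
  · rw [max_eq_right hab, intervalIntegral.integral_of_le (ha.trans hab),
      intervalIntegral.integral_of_le hab, integral_indicator measurableSet_Ioi,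
      Measure.restrict_restrict measurableSet_Ioi]
    congr 2
    ext s
    simp only [mem_inter_iff, mem_Ioi, mem_Ioc]
    exact ⟨fun ⟨h1, _, h3⟩ => ⟨h1, h3⟩, fun ⟨h1, h3⟩ => ⟨h1, ha.trans_lt h1, h3⟩⟩
  · rw [max_eq_left hba, intervalIntegral.integral_same]
    refine intervalIntegral.integral_zero_ae (Filter.Eventually.of_forall fun s hs => ?_)
    refine indicator_of_notMem (fun hsa : a < s => ?_) g
    rcases uIoc_subset_uIcc hs with ⟨-, h⟩
    exact not_le.2 hsa (h.trans (max_le ha hba))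

lemma integral_indicator_Ici_of_nonneg {E : Type*} [NormedAddCommGroup E] [NormedSpace ℝ E]
    {a : ℝ} (ha : 0 ≤ a) (b : ℝ) (g : ℝ → E) :
    ∫ s in (0:ℝ)..b, (Ici a).indicator g s = ∫ s in a..max a b, g s := by
  rw [← integral_indicator_Ioi_of_nonneg ha]
  refine intervalIntegral.integral_congr_ae ?_
  filter_upwards [indicator_ae_eq_of_ae_eq_set (f := g) (Ioi_ae_eq_Ici (μ := volume) (a := a))]
    with s hs _ using hs.symm

lemma eta2_eq_eta1_add (j k : ℕ) : eta2 j k = eta1 j k + 1 / 2 ^ (j + 1) := by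
  unfold eta1 eta2; rw [pow_succ]; field_simp

lemma eta3_eq_eta1_add (j k : ℕ) : eta3 j k = eta1 j k + 2 * (1 / 2 ^ (j + 1)) := by
  unfold eta1 eta3; rw [pow_succ]; field_simp

lemma eta1_nonneg (j k : ℕ) : 0 ≤ eta1 j k := by unfold eta1; positivity

lemma eta3_le_one {j k : ℕ} (hk : k < 2 ^ j) : eta3 j k ≤ 1 := by
  rw [eta3, div_le_one (by positivity)]
  exact_mod_cast hk

lemma eta1_lt_eta2 (j k : ℕ) : eta1 j k < eta2 j k := by
  rw [eta2_eq_eta1_add]; exact lt_add_of_pos_right _ (by positivity)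

lemma eta2_lt_eta3 (j k : ℕ) : eta2 j k < eta3 j k := by
  have hw : (0:ℝ) < 1 / 2 ^ (j + 1) := by positivity
  rw [eta2_eq_eta1_add, eta3_eq_eta1_add]; linarith

lemma haarJK_eq_indicator (j k : ℕ) (s : ℝ) :
    haarJK j k s = (Ici (eta1 j k)).indicator 1 s - 2 * (Ici (eta2 j k)).indicator 1 s
      + (Ici (eta3 j k)).indicator 1 s := by
  have h12 := eta1_lt_eta2 j k
  have h23 := eta2_lt_eta3 j k
  simp only [haarJK, indicator_apply, mem_Ici, Pi.one_apply]
  split_ifs <;> grind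

lemma integral_mul_haarJK (j k : ℕ) {g : ℝ → ℝ} {b : ℝ}
    (hg : IntervalIntegrable g volume 0 b) :
    ∫ s in (0:ℝ)..b, g s * haarJK j k s =
      (∫ s in eta1 j k..max (eta1 j k) b, g s) - 2 * (∫ s in eta2 j k..max (eta2 j k) b, g s)
        + ∫ s in eta3 j k..max (eta3 j k) b, g s := by
  have hsplit : ∀ s, g s * haarJK j k s = (Ici (eta1 j k)).indicator g s
      - 2 * (Ici (eta2 j k)).indicator g s + (Ici (eta3 j k)).indicator g s := by
    intro s
    simp only [haarJK_eq_indicator, indicator_apply, Pi.one_apply]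
    split_ifs <;> ring
  have hint : ∀ a, IntervalIntegrable ((Ici a).indicator g) volume 0 b := fun a =>
    ⟨hg.1.indicator measurableSet_Ici, hg.2.indicator measurableSet_Ici⟩
  have h2 : 0 ≤ eta2 j k := by unfold eta2; positivity
  have h3 : 0 ≤ eta3 j k := by unfold eta3; positivity
  simp_rw [hsplit]
  rw [intervalIntegral.integral_add ((hint _).sub ((hint _).const_mul 2)) (hint _),
    intervalIntegral.integral_sub (hint _) ((hint _).const_mul 2),
    intervalIntegral.integral_const_mul, integral_indicator_Ici_of_nonneg (eta1_nonneg j k),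
    integral_indicator_Ici_of_nonneg h2, integral_indicator_Ici_of_nonneg h3]

lemma integral_const_sub_id (a t : ℝ) : ∫ s in a..max a t, (t - s) = max (t - a) 0 ^ 2 / 2 := by
  rcases le_total a t with hat | hta
  · rw [max_eq_right hat, max_eq_left (sub_nonneg.2 hat),
      intervalIntegral.integral_comp_sub_left (fun x => x)]
    simp [integral_id]
  · rw [max_eq_left hta, max_eq_right (sub_nonpos.2 hta)]
    simp

lemma p2JK_eq (j k : ℕ) (t : ℝ) :
    p2JK j k t = (max (t - eta1 j k) 0 ^ 2 - 2 * max (t - eta2 j k) 0 ^ 2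
      + max (t - eta3 j k) 0 ^ 2) / 2 := by
  rw [p2JK, integral_mul_haarJK j k (g := fun s => t - s)
    ((continuous_const.sub continuous_id).intervalIntegrable _ _), integral_const_sub_id,
    integral_const_sub_id, integral_const_sub_id]
  ring

lemma abs_sq_posPart_second_diff_le {h : ℝ} (hh : 0 ≤ h) (u : ℝ) :
    |max u 0 ^ 2 - 2 * max (u - h) 0 ^ 2 + max (u - 2 * h) 0 ^ 2| ≤ 2 * h ^ 2 := by
  rw [abs_le]
  rcases le_total u 0 with h0 | h0
  · rw [max_eq_right h0, max_eq_right (by linarith), max_eq_right (by linarith)]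
    constructor <;> nlinarith
  rcases le_total u h with h1 | h1
  · rw [max_eq_left h0, max_eq_right (by linarith), max_eq_right (by linarith)]
    constructor <;> nlinarith
  rcases le_total u (2 * h) with h2 | h2
  · rw [max_eq_left h0, max_eq_left (by linarith), max_eq_right (by linarith)]
    constructor <;> nlinarith
  · rw [max_eq_left h0, max_eq_left (by linarith), max_eq_left (by linarith)]
    constructor <;> nlinarith

lemma abs_p2JK_le (j k : ℕ) (t : ℝ) : |p2JK j k t| ≤ 1 / 4 ^ (j + 1) := by
  set w : ℝ := 1 / 2 ^ (j + 1) with hw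
  have e2 : t - eta2 j k = t - eta1 j k - w := by rw [eta2_eq_eta1_add]; ring
  have e3 : t - eta3 j k = t - eta1 j k - 2 * w := by rw [eta3_eq_eta1_add]; ring
  have hw4 : w ^ 2 = 1 / 4 ^ (j + 1) := by
    rw [hw, div_pow, one_pow, ← pow_mul, mul_comm, pow_mul]; norm_num
  rw [p2JK_eq, e2, e3, abs_div, abs_two, div_le_iff₀ two_pos, ← hw4]
  linarith [abs_sq_posPart_second_diff_le (show 0 ≤ w by positivity) (t - eta1 j k)]

lemma abs_sub_two_mul_add_le {f : ℝ → ℝ} {C x h : ℝ} (hh : 0 ≤ h) (hf : Differentiable ℝ f)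
    (hf' : Differentiable ℝ (deriv f)) (hC : ∀ t ∈ Icc x (x + 2 * h), |deriv (deriv f) t| ≤ C) :
    |f x - 2 * f (x + h) + f (x + 2 * h)| ≤ C * h ^ 2 := by
  have hslope : ∀ u ∈ Icc x (x + h), ‖deriv f (u + h) - deriv f u‖ ≤ C * h := by
    intro u hu
    have := (convex_Icc x (x + 2 * h)).norm_image_sub_le_of_norm_deriv_le
      (fun t _ => hf' t) (fun t ht => (Real.norm_eq_abs _).trans_le (hC t ht))
      (show u ∈ Icc x (x + 2 * h) from ⟨hu.1, by linarith [hu.2]⟩)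
      (show u + h ∈ Icc x (x + 2 * h) from ⟨by linarith [hu.1], by linarith [hu.2]⟩)
    rwa [add_sub_cancel_left, Real.norm_of_nonneg hh] at this
  have hderiv : ∀ u, HasDerivAt (fun u => f (u + h) - f u) (deriv f (u + h) - deriv f u) u :=
    fun u => ((hf (u + h)).hasDerivAt.comp_add_const u h).sub (hf u).hasDerivAt
  have := (convex_Icc x (x + h)).norm_image_sub_le_of_norm_hasDerivWithin_le
    (fun u _ => (hderiv u).hasDerivWithinAt) hslope ⟨le_rfl, by linarith⟩
    ⟨by linarith, le_rfl⟩
  calc |f x - 2 * f (x + h) + f (x + 2 * h)|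
      = ‖(f (x + h + h) - f (x + h)) - (f (x + h) - f x)‖ := by
        rw [Real.norm_eq_abs, add_assoc, ← two_mul]; ring_nf
    _ ≤ C * h * ‖x + h - x‖ := this
    _ = C * h ^ 2 := by rw [add_sub_cancel_left, Real.norm_of_nonneg hh]; ring

lemma haarCoeff_deriv_eq {f : ℝ → ℝ} (hf : Differentiable ℝ f) (hf' : Continuous (deriv f))
    {j k : ℕ} (hk : k < 2 ^ j) :
    haarCoeff (deriv f) j k = -2 ^ j * (f (eta1 j k) - 2 * f (eta2 j k) + f (eta3 j k)) := by
  have h3 := eta3_le_one hk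
  have h2 := (eta2_lt_eta3 j k).le.trans h3
  have h1 := (eta1_lt_eta2 j k).le.trans h2
  have hftc : ∀ a, ∫ t in a..1, deriv f t = f 1 - f a := fun a =>
    intervalIntegral.integral_deriv_eq_sub (fun t _ => hf t) (hf'.intervalIntegrable _ _)
  rw [haarCoeff, integral_mul_haarJK j k (hf'.intervalIntegrable 0 1), max_eq_right h1,
    max_eq_right h2, max_eq_right h3, hftc, hftc, hftc]
  ring

lemma abs_haarCoeff_deriv_le {f : ℝ → ℝ} {ξ : ℝ} (hf : Differentiable ℝ f)
    (hf' : Differentiable ℝ (deriv f)) (hb : ∀ t ∈ Icc (0:ℝ) 1, |deriv (deriv f) t| ≤ ξ)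
    {j k : ℕ} (hk : k < 2 ^ j) : |haarCoeff (deriv f) j k| ≤ ξ / 4 / 2 ^ j := by
  have hsub : Icc (eta1 j k) (eta1 j k + 2 * (1 / 2 ^ (j + 1))) ⊆ Icc 0 1 := by
    rw [← eta3_eq_eta1_add]; exact Icc_subset_Icc (eta1_nonneg j k) (eta3_le_one hk)
  have hdiff := abs_sub_two_mul_add_le (by positivity) hf hf' fun t ht => hb t (hsub ht)
  rw [haarCoeff_deriv_eq hf hf'.continuous hk, eta2_eq_eta1_add, eta3_eq_eta1_add, abs_mul,
    abs_neg, abs_pow, abs_two]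
  calc 2 ^ j * |_| ≤ 2 ^ j * (ξ * (1 / 2 ^ (j + 1)) ^ 2) := by gcongr
    _ = ξ / 4 / 2 ^ j := by field_simp; ring

lemma abs_sum_mul_p2JK_le {c : ℕ → ℝ} {B : ℝ} {j : ℕ} (hc : ∀ k < 2 ^ j, |c k| ≤ B / 2 ^ j)
    (t : ℝ) : |∑ k ∈ Finset.range (2 ^ j), c k * p2JK j k t| ≤ B / 4 ^ (j + 1) := by
  have hB : 0 ≤ B / 2 ^ j := (abs_nonneg _).trans (hc 0 (by positivity))
  calc |∑ k ∈ Finset.range (2 ^ j), c k * p2JK j k t|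
      ≤ ∑ k ∈ Finset.range (2 ^ j), |c k * p2JK j k t| := Finset.abs_sum_le_sum_abs _ _
    _ ≤ ∑ _k ∈ Finset.range (2 ^ j), B / 2 ^ j * (1 / 4 ^ (j + 1)) :=
        Finset.sum_le_sum fun k hk => by
          rw [abs_mul]
          exact mul_le_mul (hc k (Finset.mem_range.1 hk)) (abs_p2JK_le j k t)
            (abs_nonneg _) hB
    _ = B / 4 ^ (j + 1) := by
        rw [Finset.sum_const, Finset.card_range, nsmul_eq_mul]; push_cast; field_simp

lemma abs_truncErr_le {c : ℕ → ℕ → ℝ} {B : ℝ} (hc : ∀ j k, k < 2 ^ j → |c j k| ≤ B / 2 ^ j)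
    (J : ℕ) (t : ℝ) : |truncErr c J t| ≤ B / (3 * 4 ^ (J + 1)) := by
  have hsum : HasSum (fun m : ℕ => B / 4 ^ (J + 1 + m + 1)) (B / (3 * 4 ^ (J + 1))) := by
    have hterm : (fun m : ℕ => B / 4 ^ (J + 1 + m + 1)) =
        fun m : ℕ => B / 4 ^ (J + 2) * (1 / 4) ^ m := by
      funext m; rw [one_div_pow]; field_simp; ring
    have htotal : B / (3 * 4 ^ (J + 1)) = B / 4 ^ (J + 2) * (1 - 1 / 4)⁻¹ := by
      field_simp; ring
    rw [hterm, htotal]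
    exact (hasSum_geometric_of_lt_one (by norm_num) (by norm_num)).mul_left _
  rw [truncErr, ← Real.norm_eq_abs]
  exact tsum_of_norm_bounded hsum fun m => abs_sum_mul_p2JK_le (hc _) t

lemma L2norm_le_of_abs_le {f : ℝ → ℝ} {C : ℝ} (hC : 0 ≤ C)
    (hf : ∀ t ∈ Icc (0:ℝ) 1, |f t| ≤ C) : L2norm f ≤ C := by
  rw [L2norm, Real.sqrt_le_left hC, intervalIntegral.integral_of_le zero_le_one]
  have hsq : ∀ t ∈ Ioc (0:ℝ) 1, f t ^ 2 ≤ C ^ 2 := fun t ht => by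
    rw [← sq_abs]; exact pow_le_pow_left₀ (abs_nonneg _) (hf t (Ioc_subset_Icc_self ht)) 2
  calc ∫ t in Ioc (0:ℝ) 1, f t ^ 2 ≤ ∫ _ in Ioc (0:ℝ) 1, C ^ 2 :=
        integral_mono_of_nonneg (Filter.Eventually.of_forall fun t => sq_nonneg _)
          (integrable_const _) ((ae_restrict_iff' measurableSet_Ioc).2 (ae_of_all _ hsq))
    _ = C ^ 2 := by simp

lemma lt_four_pow_of_logb_sqrt_lt {x : ℝ} (hx : 0 < x) {J : ℕ}
    (h : logb 2 (√x) - 1 < J) :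
    x < 4 ^ (J + 1) := by
  have h2 : √x < 2 ^ ((J : ℝ) + 1) :=
    (Real.logb_lt_iff_lt_rpow one_lt_two (Real.sqrt_pos.2 hx)).1 (by linarith)
  rw [show (J : ℝ) + 1 = ((J + 1 : ℕ) : ℝ) by push_cast; ring, rpow_natCast,
    Real.sqrt_lt' (by positivity)] at h2
  calc x < (2 ^ (J + 1)) ^ 2 := h2
    _ = 4 ^ (J + 1) := by rw [← pow_mul, mul_comm, pow_mul]; norm_num

theorem haar_ivp_convergence_general (y z : ℝ → ℝ) (ξ₁ ξ₂ : ℝ)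
    (hξ : ξ₂ ≤ ξ₁) (hξ₁ : 0 < ξ₁)
    (hy' : Differentiable ℝ (deriv y))
    (hy'' : Differentiable ℝ (deriv (deriv y)))
    (hz' : Differentiable ℝ (deriv z))
    (hz'' : Differentiable ℝ (deriv (deriv z)))
    (hby : ∀ t ∈ Set.Icc (0:ℝ) 1, |deriv (deriv (deriv y)) t| ≤ ξ₁)
    (hbz : ∀ t ∈ Set.Icc (0:ℝ) 1, |deriv (deriv (deriv z)) t| ≤ ξ₂)
    (J : ℕ) (ε : ℝ) (hε : 0 < ε)
    (hJ : (J : ℝ) > Real.logb 2 (Real.sqrt (ξ₁ / (3 * ε))) - 1) :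
    L2norm (truncErr (haarCoeff (deriv (deriv y))) J) +
      L2norm (truncErr (haarCoeff (deriv (deriv z))) J) < ε := by
  have hξ₂ : 0 ≤ ξ₂ := (abs_nonneg _).trans (hbz 0 ⟨le_rfl, zero_le_one⟩)
  have hEy := L2norm_le_of_abs_le (by positivity) fun t _ =>
    abs_truncErr_le (fun j k hk => abs_haarCoeff_deriv_le hy' hy'' hby hk) J t
  have hEz := L2norm_le_of_abs_le (by positivity) fun t _ =>
    abs_truncErr_le (fun j k hk => abs_haarCoeff_deriv_le hz' hz'' hbz hk) J t
  have hJ4 := lt_four_pow_of_logb_sqrt_lt (by positivity) hJ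
  rw [div_lt_iff₀ (by positivity)] at hJ4
  calc _ ≤ ξ₁ / 4 / (3 * 4 ^ (J + 1)) + ξ₂ / 4 / (3 * 4 ^ (J + 1)) := add_le_add hEy hEz
    _ < ε := by rw [← add_div, div_lt_iff₀ (by positivity)]; nlinarith

/-- Convergence of the Haar wavelet method for the IVP:
if `J > log₂(√(ξ₁/(3ε))) - 1` then
`‖E_M‖₂ = ‖E_{M1}‖₂ + ‖E_{M2}‖₂ < ε`. -/
theorem haar_ivp_convergence (y z : ℝ → ℝ) (ξ₁ ξ₂ : ℝ)
    (hξ : ξ₂ ≤ ξ₁) (hξ₁ : 0 < ξ₁)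
    (hy : Differentiable ℝ y) (hy' : Differentiable ℝ (deriv y))
    (hy'' : Differentiable ℝ (deriv (deriv y)))
    (hz : Differentiable ℝ z) (hz' : Differentiable ℝ (deriv z))
    (hz'' : Differentiable ℝ (deriv (deriv z)))
    (hby : ∀ t ∈ Set.Icc (0:ℝ) 1, |deriv (deriv (deriv y)) t| ≤ ξ₁)
    (hbz : ∀ t ∈ Set.Icc (0:ℝ) 1, |deriv (deriv (deriv z)) t| ≤ ξ₂)
    (J : ℕ) (ε : ℝ) (hε : 0 < ε)
    (hJ : (J : ℝ) > Real.logb 2 (Real.sqrt (ξ₁ / (3 * ε))) - 1) :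
    L2norm (truncErr (haarCoeff (deriv (deriv y))) J) +
      L2norm (truncErr (haarCoeff (deriv (deriv z))) J) < ε :=
  haar_ivp_convergence_general y z ξ₁ ξ₂ hξ hξ₁ hy' hy'' hz' hz'' hby hbz J ε hε hJ
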